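/- arXiv:2507.16230 — 2 statements merged into one kernel-verified Lean document; each statement's English description precedes it below -/
import Mathlib

section
/- Let f be holomorphic and nonvanishing-derivative on an open set U ⊆ ℂ and define u(z) = log(8|f'(z)|² / (1 + |f(z)|²)²). Then u satisfies the Liouville equation Δu + e^u = 0 on U (where Δ is the real Laplacian on ℝ² ≅ ℂ). -/
/-!
On `U` we have `u = log 8 + 2 log |f'| - 2 log (1 + |f|²)`. The middle term is harmonic because
`f'` is holomorphic without zeros. Restricting `log (1 + |f|²)` to the lines `t ↦ z + t` and
`t ↦ z + t i` and adding the two second derivatives, the terms in `f''` cancel (as `i² = -1`) and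
`⟨f, f'⟩² + ⟨f, i f'⟩² = |f|² |f'|²`, which leaves `Δ log (1 + |f|²) = 4 |f'|² / (1 + |f|²)²`.
Hence `Δu = -8 |f'|² / (1 + |f|²)² = -e^u`.
-/

/-- The Euclidean Laplacian `Δu = u_xx + u_yy` of a function `u : ℂ → ℝ` on `ℝ² ≅ ℂ`. -/
noncomputable def lap (u : ℂ → ℝ) (z : ℂ) : ℝ :=
  fderiv ℝ (fun w => fderiv ℝ u w 1) z 1
    + fderiv ℝ (fun w => fderiv ℝ u w Complex.I) z Complex.I

open Filter Topology InnerProductSpace Laplacian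

section SecondDerivative

variable {𝕜 E F : Type*} [NontriviallyNormedField 𝕜] [NormedAddCommGroup E] [NormedSpace 𝕜 E]
  [NormedAddCommGroup F] [NormedSpace 𝕜 F] {u : E → F} {z : E}

theorem fderiv_fderiv_apply_eq_iteratedFDeriv_two (hu : DifferentiableAt 𝕜 (fderiv 𝕜 u) z)
    (v : E) :
    fderiv 𝕜 (fun w => fderiv 𝕜 u w v) z v = iteratedFDeriv 𝕜 2 u z ![v, v] := by
  rw [iteratedFDeriv_two_apply, fderiv_clm_apply hu (differentiableAt_const v)]
  simp

theorem ContDiffAt.iteratedFDeriv_two_eq_deriv_deriv_line (hu : ContDiffAt 𝕜 2 u z) (v : E) :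
    iteratedFDeriv 𝕜 2 u z ![v, v] = deriv (deriv fun t : 𝕜 => u (z + t • v)) 0 := by
  have hline (t : 𝕜) : HasDerivAt (fun s : 𝕜 => z + s • v) v t := by
    simpa using ((hasDerivAt_id t).smul_const v).const_add z
  have hu' : DifferentiableAt 𝕜 (fderiv 𝕜 u) z :=
    (hu.fderiv_right (m := 1) (by norm_num)).differentiableAt (by simp)
  have hdiff : ∀ᶠ t : 𝕜 in 𝓝 0, DifferentiableAt 𝕜 u (z + t • v) := by
    have hcont : Tendsto (fun t : 𝕜 => z + t • v) (𝓝 0) (𝓝 z) := by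
      simpa using (hline 0).continuousAt.tendsto
    exact hcont.eventually ((hu.eventually (by simp)).mono
      fun w hw => hw.differentiableAt (by simp))
  have hfirst :
      deriv (fun t : 𝕜 => u (z + t • v)) =ᶠ[𝓝 0] fun t => fderiv 𝕜 u (z + t • v) v :=
    hdiff.mono fun t ht => (ht.hasFDerivAt.comp_hasDerivAt t (hline t)).deriv
  rw [hfirst.deriv_eq, ← fderiv_fderiv_apply_eq_iteratedFDeriv_two hu']
  exact ((hu'.clm_apply (differentiableAt_const v)).hasFDerivAt.comp_hasDerivAt_of_eq 0
    (hline 0) (by simp)).deriv.symm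

end SecondDerivative

theorem lap_eq_laplacian {u : ℂ → ℝ} {z : ℂ} (hu : ContDiffAt ℝ 2 u z) : lap u z = Δ u z := by
  have hu' : DifferentiableAt ℝ (fderiv ℝ u) z :=
    (hu.fderiv_right (m := 1) (by norm_num)).differentiableAt (by simp)
  rw [lap, laplacian_eq_iteratedFDeriv_complexPlane, fderiv_fderiv_apply_eq_iteratedFDeriv_two hu',
    fderiv_fderiv_apply_eq_iteratedFDeriv_two hu']

theorem deriv_deriv_log_one_add_norm_sq {E : Type*} [NormedAddCommGroup E] [InnerProductSpace ℝ E]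
    {g g' : ℝ → E} {g'' : E} {t₀ : ℝ} (hg : ∀ᶠ t in 𝓝 t₀, HasDerivAt g (g' t) t)
    (hg' : HasDerivAt g' g'' t₀) :
    deriv (deriv fun t => Real.log (1 + ‖g t‖ ^ 2)) t₀
      = 2 * (‖g' t₀‖ ^ 2 + inner ℝ (g t₀) g'') / (1 + ‖g t₀‖ ^ 2)
        - (2 * inner ℝ (g t₀) (g' t₀)) ^ 2 / (1 + ‖g t₀‖ ^ 2) ^ 2 := by
  have hpos : ∀ t, 0 < 1 + ‖g t‖ ^ 2 := fun t => by positivity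
  have hfirst : deriv (fun t => Real.log (1 + ‖g t‖ ^ 2))
      =ᶠ[𝓝 t₀] fun t => 2 * inner ℝ (g t) (g' t) / (1 + ‖g t‖ ^ 2) :=
    hg.mono fun t ht => by simpa using (((ht.norm_sq).const_add 1).log (hpos t).ne').deriv
  have hg₀ := hg.self_of_nhds
  rw [hfirst.deriv_eq, ((((hg₀.inner ℝ hg').const_mul 2).fun_div
    ((hg₀.norm_sq).const_add 1) (hpos t₀).ne')).deriv, real_inner_self_eq_norm_sq]
  field_simp
  ring

theorem DifferentiableAt.hasDerivAt_comp_add_real_smul {h : ℂ → ℂ} {z v : ℂ} {t : ℝ}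
    (hh : DifferentiableAt ℂ h (z + t • v)) :
    HasDerivAt (fun s : ℝ => h (z + s • v)) (deriv h (z + t • v) * v) t := by
  have hline : HasDerivAt (fun s : ℂ => z + s * v) v t := by
    simpa using ((hasDerivAt_id (t : ℂ)).mul_const v).const_add z
  simpa [Complex.real_smul] using
    (hh.hasDerivAt.comp_of_eq (t : ℂ) hline (by simp [Complex.real_smul])).comp_ofReal

theorem Complex.inner_sq_add_inner_mul_I_sq (a b : ℂ) :
    inner ℝ a b ^ 2 + inner ℝ a (b * I) ^ 2 = ‖a‖ ^ 2 * ‖b‖ ^ 2 := by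
  simp only [Complex.inner, Complex.sq_norm, Complex.normSq_apply, mul_re, mul_im, conj_re,
    conj_im, I_re, I_im]
  ring

theorem AnalyticAt.contDiffAt_log_one_add_norm_sq {f : ℂ → ℂ} {z : ℂ} (hf : AnalyticAt ℂ f z)
    {n : WithTop ℕ∞} : ContDiffAt ℝ n (fun w => Real.log (1 + ‖f w‖ ^ 2)) z :=
  (contDiffAt_const.add ((contDiff_norm_sq ℝ).contDiffAt.comp z
    (hf.contDiffAt.restrict_scalars ℝ))).log (by simp only [Function.comp_apply]; positivity)

theorem AnalyticAt.laplacian_log_one_add_norm_sq {f : ℂ → ℂ} {z : ℂ} (hf : AnalyticAt ℂ f z) :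
    Δ (fun w => Real.log (1 + ‖f w‖ ^ 2)) z = 4 * ‖deriv f z‖ ^ 2 / (1 + ‖f z‖ ^ 2) ^ 2 := by
  have hline (v : ℂ) : deriv (deriv fun t : ℝ => Real.log (1 + ‖f (z + t • v)‖ ^ 2)) 0
      = 2 * (‖deriv f z * v‖ ^ 2 + inner ℝ (f z) (deriv (deriv f) z * v * v)) / (1 + ‖f z‖ ^ 2)
        - (2 * inner ℝ (f z) (deriv f z * v)) ^ 2 / (1 + ‖f z‖ ^ 2) ^ 2 := by
    have hcont : Tendsto (fun t : ℝ => z + t • v) (𝓝 0) (𝓝 z) :=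
      Continuous.tendsto' (by fun_prop) 0 z (by simp)
    have hfirst : ∀ᶠ t : ℝ in 𝓝 0, HasDerivAt (fun s : ℝ => f (z + s • v))
        (deriv f (z + t • v) * v) t :=
      hcont.eventually (hf.eventually_analyticAt.mono fun w hw => hw.differentiableAt)
        |>.mono fun t ht => DifferentiableAt.hasDerivAt_comp_add_real_smul ht
    have hsecond : HasDerivAt (fun t : ℝ => deriv f (z + t • v) * v)
        (deriv (deriv f) z * v * v) 0 := by
      simpa using (DifferentiableAt.hasDerivAt_comp_add_real_smul (t := 0) (v := v)
        (by simpa using hf.deriv.differentiableAt)).mul_const v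
    simpa using deriv_deriv_log_one_add_norm_sq hfirst hsecond
  rw [laplacian_eq_iteratedFDeriv_complexPlane]
  dsimp only
  rw [hf.contDiffAt_log_one_add_norm_sq.iteratedFDeriv_two_eq_deriv_deriv_line,
    hf.contDiffAt_log_one_add_norm_sq.iteratedFDeriv_two_eq_deriv_deriv_line, hline, hline]
  have hpos : 0 < 1 + ‖f z‖ ^ 2 := by positivity
  have hsq := Complex.inner_sq_add_inner_mul_I_sq (f z) (deriv f z)
  simp only [mul_one, norm_mul, Complex.norm_I, mul_assoc, Complex.I_mul_I, mul_neg,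
    inner_neg_right]
  field_simp
  linear_combination (-4) * hsq

theorem Real.log_eight_mul_sq_div_sq {a b : ℝ} (ha : a ≠ 0) :
    Real.log (8 * a ^ 2 / (1 + b ^ 2) ^ 2)
      = Real.log 8 + 2 * Real.log a - 2 * Real.log (1 + b ^ 2) := by
  rw [Real.log_div (by positivity) (by positivity), Real.log_mul (by norm_num) (by positivity),
    Real.log_pow, Real.log_pow]
  push_cast
  ring

/-- if `f` is holomorphic on an open `U ⊆ ℂ` with `f' ≠ 0` on `U`, then
`u(z) = log(8|f'(z)|²/(1+|f(z)|²)²)` satisfies the Liouville equation `Δu + e^u = 0` on `U`. -/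
theorem liouville_equation_of_developing_map (U : Set ℂ) (hU : IsOpen U)
    (f : ℂ → ℂ) (hf : DifferentiableOn ℂ f U) (hf' : ∀ z ∈ U, deriv f z ≠ 0)
    (u : ℂ → ℝ)
    (hu : ∀ z ∈ U, u z = Real.log
      (8 * ‖deriv f z‖ ^ 2 / (1 + ‖f z‖ ^ 2) ^ 2)) :
    ∀ z ∈ U, lap u z + Real.exp (u z) = 0 := by
  intro z hz
  have hfz : AnalyticAt ℂ f z := hf.analyticAt (hU.mem_nhds hz)
  have hf'z : deriv f z ≠ 0 := hf' z hz
  have hH : HarmonicAt ((fun _ => Real.log 8) + (2 : ℝ) • fun w => Real.log ‖deriv f w‖) z :=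
    (harmonicAt_const _).add (hfz.deriv.harmonicAt_log_norm hf'z).const_smul
  have hB : ContDiffAt ℝ 2 (fun w => Real.log (1 + ‖f w‖ ^ 2)) z :=
    hfz.contDiffAt_log_one_add_norm_sq
  have heq : u =ᶠ[𝓝 z] ((fun _ => Real.log 8) + (2 : ℝ) • fun w => Real.log ‖deriv f w‖)
      - (2 : ℝ) • fun w => Real.log (1 + ‖f w‖ ^ 2) := by
    filter_upwards [hU.mem_nhds hz] with w hw
    simp only [Pi.add_apply, Pi.sub_apply, Pi.smul_apply, smul_eq_mul]
    rw [hu w hw, Real.log_eight_mul_sq_div_sq (norm_ne_zero_iff.mpr (hf' w hw))]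
  have hexp : Real.exp (u z) = 8 * ‖deriv f z‖ ^ 2 / (1 + ‖f z‖ ^ 2) ^ 2 := by
    rw [hu z hz, Real.exp_log (by positivity)]
  have h2B : ContDiffAt ℝ 2 ((2 : ℝ) • fun w => Real.log (1 + ‖f w‖ ^ 2)) z := hB.const_smul (2 : ℝ)
  rw [lap_eq_laplacian ((hH.1.sub h2B).congr_of_eventuallyEq heq),
    (laplacian_congr_nhds heq).eq_of_nhds, hH.1.laplacian_sub h2B,
    laplacian_smul _ hB, hH.2.eq_of_nhds, hfz.laplacian_log_one_add_norm_sq, hexp]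
  simp only [Pi.zero_apply, smul_eq_mul]
  ring
end

section
/- Let u be a real-valued smooth function on an open set U ⊆ ℂ satisfying Δu + e^u = 0. Then the function u_{zz} - (1/2)u_z², where u_z = (∂_x - i∂_y)u/2, is holomorphic on U (i.e. its ∂/∂z̄ derivative vanishes). Explicitly, ∂_{z̄}(u_{zz} - (1/2)u_z²) = (u_{zz̄})_z - u_z·u_{zz̄} = -(1/4)(e^u)_z + (1/4)e^u·u_z = 0. -/
/-- The Wirtinger derivative `∂_z u = (∂_x u - i ∂_y u)/2`. -/
noncomputable def wirtDz (u : ℂ → ℂ) (z : ℂ) : ℂ :=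
  (fderiv ℝ u z 1 - Complex.I * fderiv ℝ u z Complex.I) / 2

/-- The Wirtinger derivative `∂_{z̄} u = (∂_x u + i ∂_y u)/2`. -/
noncomputable def wirtDzbar (u : ℂ → ℂ) (z : ℂ) : ℂ :=
  (fderiv ℝ u z 1 + Complex.I * fderiv ℝ u z Complex.I) / 2

open Complex

lemma dirDeriv_contDiffAt {F : Type*} [NormedAddCommGroup F] [NormedSpace ℝ F]
    {g : ℂ → F} {z : ℂ} (hg : ContDiffAt ℝ (⊤ : ℕ∞) g z) (v : ℂ) :
    ContDiffAt ℝ (⊤ : ℕ∞) (fun w => fderiv ℝ g w v) z := by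
  have h1 : ContDiffAt ℝ (⊤ : ℕ∞) (fderiv ℝ g) z := hg.fderiv_right (by simp)
  exact (ContinuousLinearMap.apply ℝ F v).contDiff.contDiffAt.comp z h1

lemma fderiv_dirDeriv_symm {g : ℂ → ℂ} {z : ℂ} (hg : ContDiffAt ℝ (⊤ : ℕ∞) g z) (a b : ℂ) :
    fderiv ℝ (fun w => fderiv ℝ g w a) z b = fderiv ℝ (fun w => fderiv ℝ g w b) z a := by
  have hsym : IsSymmSndFDerivAt ℝ g z := hg.isSymmSndFDerivAt (by rw [minSmoothness_of_isRCLikeNormedField]; exact WithTop.coe_le_coe.mpr (le_top : (2 : ℕ∞) ≤ ⊤))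
  have hd : DifferentiableAt ℝ (fderiv ℝ g) z := (hg.fderiv_right (m := (⊤ : ℕ∞)) (by simp)).differentiableAt (by simp)
  have key : ∀ c : ℂ, fderiv ℝ (fun w => fderiv ℝ g w c) z
      = (ContinuousLinearMap.apply ℝ ℂ c).comp (fderiv ℝ (fderiv ℝ g) z) := by
    intro c
    exact (((ContinuousLinearMap.apply ℝ ℂ c).hasFDerivAt).comp z hd.hasFDerivAt).fderiv
  rw [key, key]
  exact hsym b a

lemma wirtDz_contDiffAt {g : ℂ → ℂ} {z : ℂ} (hg : ContDiffAt ℝ (⊤ : ℕ∞) g z) :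
    ContDiffAt ℝ (⊤ : ℕ∞) (wirtDz g) z := by
  unfold wirtDz
  exact ((dirDeriv_contDiffAt hg 1).sub (contDiffAt_const.mul (dirDeriv_contDiffAt hg I))).div_const 2

lemma fderiv_comb_apply {A B : ℂ → ℂ} {z : ℂ} (c : ℂ)
    (hA : DifferentiableAt ℝ A z) (hB : DifferentiableAt ℝ B z) (v : ℂ) :
    fderiv ℝ (fun w => (A w + c * B w) / 2) z v
      = (fderiv ℝ A z v + c * fderiv ℝ B z v) / 2 := by
  have h0 : (fun w => (A w + c * B w) / 2) = fun w => (2:ℂ)⁻¹ • (A w + c * B w) := by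
    funext w; simp [smul_eq_mul, div_eq_inv_mul]
  have h := (hA.hasFDerivAt.add ((hB.hasFDerivAt).const_mul c)).const_smul (2:ℂ)⁻¹
  rw [h0, show (fun w => (2:ℂ)⁻¹ • (A w + c * B w)) = (2:ℂ)⁻¹ • (A + fun y => c * B y) from rfl, h.fderiv]
  simp [smul_eq_mul]
  ring

lemma fderiv_wirtDz_apply {g : ℂ → ℂ} {z : ℂ} (hg : ContDiffAt ℝ (⊤ : ℕ∞) g z) (v : ℂ) :
    fderiv ℝ (wirtDz g) z v
      = (fderiv ℝ (fun w => fderiv ℝ g w 1) z v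
          + (-I) * fderiv ℝ (fun w => fderiv ℝ g w I) z v) / 2 := by
  have hA := (dirDeriv_contDiffAt hg 1).differentiableAt (by simp)
  have hB := (dirDeriv_contDiffAt hg I).differentiableAt (by simp)
  have : wirtDz g = fun w => ((fun w => fderiv ℝ g w 1) w + (-I) * (fun w => fderiv ℝ g w I) w) / 2 := by
    funext w; unfold wirtDz; ring
  rw [this, fderiv_comb_apply (-I) hA hB v]

lemma fderiv_wirtDzbar_apply {g : ℂ → ℂ} {z : ℂ} (hg : ContDiffAt ℝ (⊤ : ℕ∞) g z) (v : ℂ) :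
    fderiv ℝ (wirtDzbar g) z v
      = (fderiv ℝ (fun w => fderiv ℝ g w 1) z v
          + I * fderiv ℝ (fun w => fderiv ℝ g w I) z v) / 2 := by
  have hA := (dirDeriv_contDiffAt hg 1).differentiableAt (by simp)
  have hB := (dirDeriv_contDiffAt hg I).differentiableAt (by simp)
  have : wirtDzbar g = fun w => ((fun w => fderiv ℝ g w 1) w + I * (fun w => fderiv ℝ g w I) w) / 2 := by
    funext w; unfold wirtDzbar; ring
  rw [this, fderiv_comb_apply I hA hB v]

/-- Commutation of the Wirtinger derivatives. -/
lemma wirtDzbar_wirtDz_comm {g : ℂ → ℂ} {z : ℂ} (hg : ContDiffAt ℝ (⊤ : ℕ∞) g z) :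
    wirtDzbar (wirtDz g) z = wirtDz (wirtDzbar g) z := by
  rw [show wirtDzbar (wirtDz g) z
        = (fderiv ℝ (wirtDz g) z 1 + I * fderiv ℝ (wirtDz g) z I) / 2 from rfl,
      show wirtDz (wirtDzbar g) z
        = (fderiv ℝ (wirtDzbar g) z 1 - I * fderiv ℝ (wirtDzbar g) z I) / 2 from rfl,
      show fderiv ℝ (wirtDz g) z 1 = _ from fderiv_wirtDz_apply hg 1,
      show fderiv ℝ (wirtDz g) z I = _ from fderiv_wirtDz_apply hg I,
      show fderiv ℝ (wirtDzbar g) z 1 = _ from fderiv_wirtDzbar_apply hg 1,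
      show fderiv ℝ (wirtDzbar g) z I = _ from fderiv_wirtDzbar_apply hg I,
      fderiv_dirDeriv_symm hg 1 I]
  ring

lemma wirtDz_congr {g h : ℂ → ℂ} {z : ℂ} (hgh : g =ᶠ[nhds z] h) :
    wirtDz g z = wirtDz h z := by
  unfold wirtDz; rw [hgh.fderiv_eq]

lemma wirtDzbar_sub {g h : ℂ → ℂ} {z : ℂ} (hg : DifferentiableAt ℝ g z)
    (hh : DifferentiableAt ℝ h z) :
    wirtDzbar (fun w => g w - h w) z = wirtDzbar g z - wirtDzbar h z := by
  unfold wirtDzbar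
  rw [fderiv_fun_sub hg hh]
  simp only [ContinuousLinearMap.sub_apply]
  ring

lemma wirtDzbar_sq_div_two {g : ℂ → ℂ} {z : ℂ} (hg : DifferentiableAt ℝ g z) :
    wirtDzbar (fun w => g w ^ 2 / 2) z = g z * wirtDzbar g z := by
  have e1 : (fun w => g w ^ 2 / 2) = fun w => (2:ℂ)⁻¹ * (g w * g w) := by
    funext w; ring
  have h : HasFDerivAt (fun w => g w ^ 2 / 2) ((2:ℂ)⁻¹ • (g z • fderiv ℝ g z + g z • fderiv ℝ g z)) z := by
    rw [e1]
    exact (hg.hasFDerivAt.mul hg.hasFDerivAt).const_mul (2:ℂ)⁻¹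
  unfold wirtDzbar
  rw [h.fderiv]
  simp [smul_eq_mul]
  ring

lemma fderiv_ofReal_comp {g : ℂ → ℝ} {z : ℂ} (hg : DifferentiableAt ℝ g z) :
    fderiv ℝ (fun w => ((g w : ℝ) : ℂ)) z = Complex.ofRealCLM.comp (fderiv ℝ g z) :=
  (Complex.ofRealCLM.hasFDerivAt.comp z hg.hasFDerivAt).fderiv

/-- The key Laplacian identity: `∂_z̄ ∂_z u = (Δu)/4`. -/
lemma wirtDzbar_wirtDz_eq_lap {U : Set ℂ} (hU : IsOpen U) {u : ℂ → ℝ}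
    (hu : ContDiffOn ℝ (⊤ : ℕ∞) u U) {z : ℂ} (hz : z ∈ U) :
    wirtDzbar (wirtDz (fun x => ((u x : ℝ) : ℂ))) z = (lap u z : ℂ) / 4 := by
  set f : ℂ → ℂ := fun x => ((u x : ℝ) : ℂ) with hf
  have hucd : ∀ w ∈ U, ContDiffAt ℝ (⊤ : ℕ∞) u w := fun w hw => hu.contDiffAt (hU.mem_nhds hw)
  have hfz : ContDiffAt ℝ (⊤ : ℕ∞) f z :=
    Complex.ofRealCLM.contDiff.contDiffAt.comp z (hucd z hz)
  have hA : ∀ v : ℂ, (fun w => fderiv ℝ f w v) =ᶠ[nhds z] (fun w => ((fderiv ℝ u w v : ℝ) : ℂ)) := by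
    intro v
    filter_upwards [hU.mem_nhds hz] with w hw
    rw [show fderiv ℝ f w = Complex.ofRealCLM.comp (fderiv ℝ u w) from
      fderiv_ofReal_comp ((hucd w hw).differentiableAt (by simp))]
    rfl
  have hdirc : ∀ v : ℂ, ContDiffAt ℝ (⊤ : ℕ∞) (fun w => fderiv ℝ u w v) z :=
    fun v => dirDeriv_contDiffAt (hucd z hz) v
  have hAd : ∀ v v' : ℂ, fderiv ℝ (fun w => fderiv ℝ f w v) z v'
      = ((fderiv ℝ (fun w => fderiv ℝ u w v) z v' : ℝ) : ℂ) := by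
    intro v v'
    rw [(hA v).fderiv_eq,
      fderiv_ofReal_comp ((hdirc v).differentiableAt (by simp))]
    rfl
  rw [show wirtDzbar (wirtDz f) z
        = (fderiv ℝ (wirtDz f) z 1 + I * fderiv ℝ (wirtDz f) z I) / 2 from rfl,
      show fderiv ℝ (wirtDz f) z 1 = _ from fderiv_wirtDz_apply hfz 1,
      show fderiv ℝ (wirtDz f) z I = _ from fderiv_wirtDz_apply hfz I,
      fderiv_dirDeriv_symm hfz 1 I, hAd 1 1, hAd I 1, hAd I I]
  unfold lap
  push_cast
  ring_nf
  simp [Complex.I_sq]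
  ring

/-- Wirtinger derivative of `exp ∘ u` (chain rule). -/
lemma wirtDz_exp_comp {u : ℂ → ℝ} {z : ℂ} (hg : DifferentiableAt ℝ u z) :
    wirtDz (fun w => ((Real.exp (u w) : ℝ) : ℂ)) z
      = Real.exp (u z) * wirtDz (fun w => ((u w : ℝ) : ℂ)) z := by
  have hE : HasFDerivAt (fun w => Real.exp (u w)) (Real.exp (u z) • fderiv ℝ u z) z :=
    (Real.hasDerivAt_exp (u z)).comp_hasFDerivAt z hg.hasFDerivAt
  have h1 : HasFDerivAt (fun w => ((Real.exp (u w) : ℝ) : ℂ))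
      (Complex.ofRealCLM.comp (Real.exp (u z) • fderiv ℝ u z)) z :=
    Complex.ofRealCLM.hasFDerivAt.comp z hE
  unfold wirtDz
  rw [h1.fderiv, fderiv_ofReal_comp hg]
  simp [smul_eq_mul]
  ring

lemma wirtDz_const_mul {g : ℂ → ℂ} {z c : ℂ} (hg : DifferentiableAt ℝ g z) :
    wirtDz (fun w => c * g w) z = c * wirtDz g z := by
  unfold wirtDz
  rw [fderiv_const_mul hg c]
  simp [smul_eq_mul]
  ring

/-- if `u` is a real smooth solution of `Δu + e^u = 0` on an open `U ⊆ ℂ`,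
then `u_zz - (1/2)u_z²` is holomorphic on `U`: its `∂/∂z̄` derivative vanishes. -/
theorem schwarzian_quantity_is_holomorphic (U : Set ℂ) (hU : IsOpen U)
    (u : ℂ → ℝ) (hu : ContDiffOn ℝ (⊤ : ℕ∞) u U)
    (heq : ∀ z ∈ U, lap u z + Real.exp (u z) = 0) :
    ∀ z ∈ U,
      wirtDzbar (fun w => wirtDz (wirtDz (fun x => ((u x : ℝ) : ℂ))) w
        - (wirtDz (fun x => ((u x : ℝ) : ℂ)) w) ^ 2 / 2) z = 0 := by
  intro z hz
  set f : ℂ → ℂ := fun x => ((u x : ℝ) : ℂ) with hfdef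
  have hucd : ∀ w ∈ U, ContDiffAt ℝ (⊤ : ℕ∞) u w := fun w hw => hu.contDiffAt (hU.mem_nhds hw)
  have hfc : ∀ w ∈ U, ContDiffAt ℝ (⊤ : ℕ∞) f w := fun w hw =>
    Complex.ofRealCLM.contDiff.contDiffAt.comp w (hucd w hw)
  have hF1c : ∀ w ∈ U, ContDiffAt ℝ (⊤ : ℕ∞) (wirtDz f) w := fun w hw => wirtDz_contDiffAt (hfc w hw)
  have hF2c : ContDiffAt ℝ (⊤ : ℕ∞) (wirtDz (wirtDz f)) z := wirtDz_contDiffAt (hF1c z hz)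
  -- the PDE in Wirtinger form, on all of U
  have hpde : ∀ w ∈ U, wirtDzbar (wirtDz f) w = -((Real.exp (u w) : ℝ) : ℂ) / 4 := by
    intro w hw
    rw [wirtDzbar_wirtDz_eq_lap hU hu hw]
    have := heq w hw
    have h2 : lap u w = -Real.exp (u w) := by linarith
    rw [h2]
    push_cast
    ring
  -- split the ∂z̄ of the difference
  rw [wirtDzbar_sub (hF2c.differentiableAt (by simp))
      (((((hF1c z hz).pow 2)).div_const 2).differentiableAt (by simp))]
  rw [wirtDzbar_sq_div_two ((hF1c z hz).differentiableAt (by simp))]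
  -- commutation for the first term
  rw [wirtDzbar_wirtDz_comm (hF1c z hz)]
  -- the inner function equals -(e^u)/4 near z
  have hev : wirtDzbar (wirtDz f) =ᶠ[nhds z] (fun w => -((Real.exp (u w) : ℝ) : ℂ) / 4) := by
    filter_upwards [hU.mem_nhds hz] with w hw using hpde w hw
  rw [wirtDz_congr hev]
  -- compute ∂z of -(e^u)/4
  have hdiffu : DifferentiableAt ℝ u z := (hucd z hz).differentiableAt (by simp)
  have hEdiff : DifferentiableAt ℝ (fun w => ((Real.exp (u w) : ℝ) : ℂ)) z :=
    Complex.ofRealCLM.differentiable.differentiableAt.comp z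
      (Real.differentiable_exp.differentiableAt.comp z hdiffu)
  have hrw : (fun w => -((Real.exp (u w) : ℝ) : ℂ) / 4)
      = fun w => (-(1:ℂ)/4) * ((Real.exp (u w) : ℝ) : ℂ) := by
    funext w; ring
  rw [hrw, wirtDz_const_mul hEdiff, wirtDz_exp_comp hdiffu, hpde z hz]
  ring
end
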